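/- arXiv:2303.05067 — 4 statements merged into one kernel-verified Lean document; each statement's English description precedes it below -/
import Mathlib

section
/- Fix real numbers f_1 ≥ f_2 ≥ … ≥ f_K and 1 ≤ l ≤ K. Then (1/C(K,l)) · Σ_{A ⊆ [K], |A| = l} max_{k ∈ A} f_k = Σ_{k=1}^{K−l+1} (C(K−k, l−1)/C(K,l)) · f_k. That is, the average over all l-element subsets of the maximum of f over the subset equals the OWA criterion with weights w_k = C(K−k, l−1)/C(K,l) for k ≤ K−l+1 and w_k = 0 otherwise. -/
/-! Since `f` is antitone, its maximum over a subset `A` is its value at `min A`. The subsets of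
size `l + 1` with minimum `k` are exactly `insert k B` for the `l`-subsets `B` of the elements
above `k`, so each `f k` is counted `C(#{j | k < j}, l)` times. -/

open Finset

variable {α : Type*}

namespace Finset

theorem nonempty_of_mem_powersetCard_succ {s A : Finset α} {l : ℕ}
    (hA : A ∈ s.powersetCard (l + 1)) : A.Nonempty :=
  card_pos.mp ((mem_powersetCard.mp hA).2 ▸ l.add_one_pos)

variable [LinearOrder α]

theorem min_eq_coe_iff {s : Finset α} {k : α} : s.min = k ↔ k ∈ s ∧ ∀ j ∈ s, k ≤ j := by
  refine ⟨fun h => ⟨mem_of_min h, fun j hj => WithTop.coe_le_coe.mp (h ▸ min_le hj)⟩, ?_⟩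
  rintro ⟨hk, hle⟩
  exact le_antisymm (min_le hk)
    (Finset.le_min_iff.mpr fun j hj => WithTop.coe_le_coe.mpr (hle j hj))

theorem card_filter_powersetCard_min_eq {s : Finset α} {k : α} (hk : k ∈ s) (l : ℕ) :
    #{A ∈ s.powersetCard (l + 1) | A.min = (k : WithTop α)} = (#{j ∈ s | k < j}).choose l := by
  rw [← card_powersetCard]
  refine card_nbij' (fun A => A.erase k) (insert k) ?_ ?_ ?_ ?_
  · intro A hA
    simp only [mem_coe, mem_filter, mem_powersetCard, min_eq_coe_iff] at hA ⊢
    obtain ⟨⟨hAs, hcard⟩, hkA, hmin⟩ := hA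
    refine ⟨fun j hj => ?_, by rw [card_erase_of_mem hkA, hcard, Nat.add_sub_cancel]⟩
    obtain ⟨hjk, hjA⟩ := mem_erase.mp hj
    exact mem_filter.mpr ⟨hAs hjA, lt_of_le_of_ne (hmin j hjA) (Ne.symm hjk)⟩
  · intro B hB
    simp only [mem_coe, mem_filter, mem_powersetCard, min_eq_coe_iff, subset_iff] at hB ⊢
    obtain ⟨hBs, hcard⟩ := hB
    have hkB : k ∉ B := fun h => lt_irrefl k (hBs h).2
    refine ⟨⟨fun j hj => ?_, by rw [card_insert_of_notMem hkB, hcard]⟩,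
      mem_insert_self k B, fun j hj => ?_⟩ <;> rcases mem_insert.mp hj with rfl | hj
    exacts [hk, (hBs hj).1, le_rfl, (hBs hj).2.le]
  · intro A hA
    exact insert_erase (mem_of_min (mem_filter.mp hA).2)
  · intro B hB
    exact erase_insert fun h => lt_irrefl k (mem_filter.mp ((mem_powersetCard.mp hB).1 h)).2

theorem sup'_eq_of_min_eq {β : Type*} [LinearOrder β] {A : Finset α} (h : A.Nonempty) {f : α → β}
    (hf : AntitoneOn f A) {k : α} (hk : A.min = k) : A.sup' h f = f k := by
  obtain ⟨hkA, hmin⟩ := min_eq_coe_iff.mp hk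
  exact le_antisymm (sup'_le h f fun j hj => hf hkA hj (hmin j hj)) (le_sup' f hkA)

theorem sum_attach_powersetCard_sup' {β : Type*} [LinearOrder β] [AddCommMonoid β]
    (s : Finset α) (l : ℕ) {f : α → β} (hf : AntitoneOn f s) :
    ∑ A ∈ (s.powersetCard (l + 1)).attach,
        A.1.sup' (nonempty_of_mem_powersetCard_succ A.2) f
      = ∑ k ∈ s, (#{j ∈ s | k < j}).choose l • f k := by
  -- Rewriting each term without its membership proof is what lets `sum_attach` apply.
  have hsplit : ∀ A ∈ (s.powersetCard (l + 1)).attach,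
      A.1.sup' (nonempty_of_mem_powersetCard_succ A.2) f
        = ∑ k ∈ s, if A.1.min = (k : WithTop α) then f k else 0 := by
    rintro ⟨A, hA⟩ -
    have hAs := (mem_powersetCard.mp hA).1
    have h : A.Nonempty := nonempty_of_mem_powersetCard_succ hA
    simp only [← coe_min' h, WithTop.coe_eq_coe, sum_ite_eq, if_pos (hAs (min'_mem A h))]
    exact sup'_eq_of_min_eq h (hf.mono hAs) (coe_min' h).symm
  rw [sum_congr rfl hsplit, sum_attach (s.powersetCard (l + 1))
    (fun A => ∑ k ∈ s, if A.min = (k : WithTop α) then f k else 0), sum_comm]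
  refine sum_congr rfl fun k hk => ?_
  rw [← sum_filter, sum_const, card_filter_powersetCard_min_eq hk]

end Finset

theorem stmt_8 (K l : ℕ) (hl : 1 ≤ l)
    (f : Fin K → ℝ) (hf : ∀ i j : Fin K, i ≤ j → f j ≤ f i) :
    (1 / (K.choose l : ℝ)) *
      ∑ A ∈ ((Finset.univ : Finset (Fin K)).powersetCard l).attach,
        A.1.sup' (Finset.card_pos.mp (by
          rw [(Finset.mem_powersetCard.mp A.2).2]; omega)) f
    = ∑ k : Fin K, (((K - 1 - (k : ℕ)).choose (l - 1) : ℝ) / (K.choose l : ℝ)) * f k := by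
  obtain ⟨l, rfl⟩ := Nat.exists_eq_add_of_le' hl
  have hanti : Antitone f := fun i j hij => hf i j hij
  rw [sum_attach_powersetCard_sup' univ l (hanti.antitoneOn _), mul_sum]
  refine sum_congr rfl fun k _ => ?_
  rw [filter_lt_eq_Ioi, Fin.card_Ioi, nsmul_eq_mul, Nat.add_sub_cancel]
  ring
end

section
/- Generalized Hurwicz approximation guarantee (pessimistic regime): Let 𝓕 be a finite family of subsets of [K] with |F| ≥ 2 for all F, masses m(F) > 0 summing to 1, z = max_F |F|, and α ∈ [1/2, 1]. Let X be a set of 'solutions', and for x ∈ X let f(x, k) ≥ 0 be the cost of x under scenario k, with H_α(x) = Σ_F m(F)(α max_{k∈F} f(x,k) + (1−α) min_{k∈F} f(x,k)). If x̂ minimizes Σ_k v_k f(x,k) over X (where v_k = Σ_{F∋k} m(F)) and x* minimizes H_α over X, then H_α(x̂) ≤ z·H_α(x*). -/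
/-!
Double counting turns the objective minimised by `x̂` into `S x = Σ_F m(F) Σ_{k ∈ F} f(x,k)`.
On a single set `F` with maximum `M`, minimum `μ` and sum `s`, `|F| ≥ 2` and `f ≥ 0` give
`s ≥ M + μ`, hence `αM + (1-α)μ ≤ α s` when `α ≥ 1/2`; on the other side
`α s ≤ |F| α M ≤ z (αM + (1-α)μ)`. Summing, `H ≤ α S ≤ z H`, so
`H(x̂) ≤ α S(x̂) ≤ α S(x*) ≤ z H(x*)`.
-/

open Finset

noncomputable def hurwicz {ι : Type*} (α : ℝ) (s : Finset ι) (hs : s.Nonempty) (g : ι → ℝ) : ℝ :=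
  α * s.sup' hs g + (1 - α) * s.inf' hs g

section Hurwicz

variable {ι : Type*} {α : ℝ} {s : Finset ι} {g : ι → ℝ}

lemma hurwicz_nonneg (hne : s.Nonempty) (hα : α ≤ 1) (hα₀ : 0 ≤ α) (hg : ∀ i ∈ s, 0 ≤ g i) :
    0 ≤ hurwicz α s hne g := by
  obtain ⟨i, hi⟩ := hne
  have hsup : 0 ≤ s.sup' ⟨i, hi⟩ g := (hg i hi).trans (le_sup' g hi)
  have hinf : 0 ≤ s.inf' ⟨i, hi⟩ g := le_inf' _ g hg
  unfold hurwicz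
  have := sub_nonneg.2 hα
  positivity

lemma hurwicz_le_mul_sum (hne : s.Nonempty) (hs : 1 < s.card) (hα : 1 / 2 ≤ α)
    (hg : ∀ i ∈ s, 0 ≤ g i) : hurwicz α s hne g ≤ α * ∑ i ∈ s, g i := by
  obtain ⟨i, hi, hi_max⟩ := s.exists_mem_eq_sup' hne g
  obtain ⟨j, hj, hji⟩ := s.exists_mem_ne hs i
  have hinf_le : s.inf' hne g ≤ g j := inf'_le g hj
  have hinf : 0 ≤ s.inf' hne g := le_inf' hne g hg
  have hpair : g i + g j ≤ ∑ k ∈ s, g k := add_le_sum hg hi hj hji.symm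
  unfold hurwicz
  rw [hi_max]
  nlinarith

lemma mul_sum_le_mul_hurwicz_of_card_le {c : ℝ} (hne : s.Nonempty) (hc : s.card ≤ c)
    (hα : α ≤ 1) (hα₀ : 0 ≤ α) (hg : ∀ i ∈ s, 0 ≤ g i) :
    α * ∑ i ∈ s, g i ≤ c * hurwicz α s hne g := by
  have hsum : ∑ i ∈ s, g i ≤ s.card * s.sup' hne g := by
    simpa only [nsmul_eq_mul] using sum_le_card_nsmul s g _ fun i hi => le_sup' g hi
  have hinf : 0 ≤ s.inf' hne g := le_inf' hne g hg
  calc α * ∑ i ∈ s, g i ≤ s.card * (α * s.sup' hne g) := by nlinarith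
    _ ≤ s.card * hurwicz α s hne g := by
      unfold hurwicz
      gcongr
      nlinarith
    _ ≤ c * hurwicz α s hne g := mul_le_mul_of_nonneg_right hc (hurwicz_nonneg hne hα hα₀ hg)

end Hurwicz

lemma sum_filter_mem_mul_eq_sum_mul_sum {ι : Type*} [Fintype ι] [DecidableEq ι]
    (𝓕 : Finset (Finset ι)) (m : Finset ι → ℝ) (g : ι → ℝ) :
    ∑ k, (∑ F ∈ 𝓕.filter (fun F => k ∈ F), m F) * g k = ∑ F ∈ 𝓕, m F * ∑ k ∈ F, g k := by
  simp only [sum_mul, mul_sum]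
  exact sum_comm' fun k F => by simp [and_comm]

theorem stmt_15 (K : ℕ)
    (𝓕 : Finset (Finset (Fin K))) (h𝓕 : ∀ F ∈ 𝓕, 2 ≤ F.card)
    (m : Finset (Fin K) → ℝ) (hm_pos : ∀ F ∈ 𝓕, 0 < m F)
    (z : ℕ) (hz : z = 𝓕.sup Finset.card)
    (X : Type*)
    (f : X → Fin K → ℝ) (hf : ∀ x k, 0 ≤ f x k)
    (v : Fin K → ℝ) (hv : ∀ k, v k = ∑ F ∈ 𝓕.filter (fun F => k ∈ F), m F)
    (α : ℝ) (hα : 1 / 2 ≤ α ∧ α ≤ 1)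
    (H : X → ℝ)
    (hH : ∀ x, H x = ∑ F ∈ 𝓕.attach, m F.1 *
      (α * F.1.sup' (Finset.card_pos.mp (by have := h𝓕 F.1 F.2; omega)) (f x) +
       (1 - α) * F.1.inf' (Finset.card_pos.mp (by have := h𝓕 F.1 F.2; omega)) (f x)))
    (xhat xstar : X)
    (hxhat : ∀ x : X, ∑ k, v k * f xhat k ≤ ∑ k, v k * f x k) :
    H xhat ≤ (z : ℝ) * H xstar := by
  obtain ⟨hα_half, hα_one⟩ := hα
  have hα₀ : 0 ≤ α := by linarith
  set S : X → ℝ := fun x => ∑ F ∈ 𝓕, m F * ∑ k ∈ F, f x k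
  have hH_le : ∀ x, H x ≤ α * S x := fun x => by
    rw [hH, mul_sum, ← sum_attach 𝓕]
    refine sum_le_sum fun F _ => ?_
    rw [mul_left_comm]
    exact mul_le_mul_of_nonneg_left (hurwicz_le_mul_sum _ (h𝓕 F.1 F.2) hα_half fun k _ => hf x k)
      (hm_pos F.1 F.2).le
  have hS_le : ∀ x, α * S x ≤ z * H x := fun x => by
    rw [hH, mul_sum, mul_sum, ← sum_attach 𝓕]
    refine sum_le_sum fun F _ => ?_
    have hF : (F.1.card : ℝ) ≤ z := by exact_mod_cast hz ▸ le_sup (f := card) F.2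
    rw [mul_left_comm, mul_left_comm (z : ℝ)]
    exact mul_le_mul_of_nonneg_left
      (mul_sum_le_mul_hurwicz_of_card_le _ hF hα_one hα₀ fun k _ => hf x k) (hm_pos F.1 F.2).le
  have hS : S xhat ≤ S xstar := by
    simpa only [hv, sum_filter_mem_mul_eq_sum_mul_sum] using hxhat xstar
  calc H xhat ≤ α * S xhat := hH_le xhat
    _ ≤ α * S xstar := mul_le_mul_of_nonneg_left hS hα₀
    _ ≤ z * H xstar := hS_le xstar
end

section
/- γ-approximation transfer: Let α ∈ (0,1], γ ≥ 1, and let G(x) = Σ_{F∈𝓕} m(F) max_{k∈F} f(x,k) (the worst-case expectation). Suppose x̂ ∈ X satisfies G(x̂) ≤ γ·G(x) for all x ∈ X, G(x̂) > 0, and x* minimizes H_α(x) = Σ_F m(F)(α max_{k∈F} f(x,k) + (1−α) min_{k∈F} f(x,k)). Then H_α(x̂) ≤ γ·(1 + ((1−α)/α)·ρ)·H_α(x*), where ρ = (Σ_F m(F) min_{k∈F} f(x̂,k)) / (Σ_F m(F) max_{k∈F} f(x̂,k)) ∈ [0,1]. -/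
/-! The Hurwicz criterion `H_α = α·G + (1 - α)·B`, with `B` the expected best case, satisfies
`α·G ≤ H_α` everywhere, since `B ≥ 0`, while at `x̂` it equals `α·G(x̂)·(1 + (1 - α)/α·ρ)` by the
definition of `ρ = B(x̂)/G(x̂)`. Hence `H_α(x̂) ≤ α·γ·G(x)·(1 + (1 - α)/α·ρ) ≤ γ·(1 + (1 - α)/α·ρ)·H_α(x)`
for every `x`. -/

section ExpectedExtrema

variable {κ : Type*} (𝓕 : Finset (Finset κ)) (h𝓕 : ∀ F ∈ 𝓕, F.Nonempty) (m : Finset κ → ℝ)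

def expectedMax (g : κ → ℝ) : ℝ :=
  ∑ F ∈ 𝓕.attach, m F.1 * F.1.sup' (h𝓕 F.1 F.2) g

def expectedMin (g : κ → ℝ) : ℝ :=
  ∑ F ∈ 𝓕.attach, m F.1 * F.1.inf' (h𝓕 F.1 F.2) g

variable {𝓕 h𝓕 m}

theorem expectedMin_nonneg (hm : ∀ F ∈ 𝓕, 0 ≤ m F) {g : κ → ℝ} (hg : ∀ k, 0 ≤ g k) :
    0 ≤ expectedMin 𝓕 h𝓕 m g :=
  Finset.sum_nonneg fun F _ =>
    mul_nonneg (hm F.1 F.2) (Finset.le_inf' _ _ fun k _ => hg k)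

theorem expectedMin_le_expectedMax (hm : ∀ F ∈ 𝓕, 0 ≤ m F) (g : κ → ℝ) :
    expectedMin 𝓕 h𝓕 m g ≤ expectedMax 𝓕 h𝓕 m g :=
  Finset.sum_le_sum fun F _ =>
    have ⟨_, hk⟩ := h𝓕 F.1 F.2
    mul_le_mul_of_nonneg_left ((Finset.inf'_le _ hk).trans (Finset.le_sup' _ hk)) (hm F.1 F.2)

theorem sum_hurwicz_eq (α : ℝ) (g : κ → ℝ) :
    ∑ F ∈ 𝓕.attach, m F.1 * (α * F.1.sup' (h𝓕 F.1 F.2) g + (1 - α) * F.1.inf' (h𝓕 F.1 F.2) g) =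
      α * expectedMax 𝓕 h𝓕 m g + (1 - α) * expectedMin 𝓕 h𝓕 m g := by
  simp only [expectedMax, expectedMin, Finset.mul_sum, ← Finset.sum_add_distrib]
  exact Finset.sum_congr rfl fun F _ => by ring

end ExpectedExtrema

theorem hurwicz_le_of_max_le_mul {α γ M N M' N' : ℝ} (hα : 0 < α) (hα1 : α ≤ 1) (hγ : 0 ≤ γ)
    (hM : 0 < M) (hN : 0 ≤ N) (hN' : 0 ≤ N') (hMM' : M ≤ γ * M') :
    α * M + (1 - α) * N ≤ γ * (1 + (1 - α) / α * (N / M)) * (α * M' + (1 - α) * N') := by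
  have h1α : 0 ≤ 1 - α := sub_nonneg.2 hα1
  have hc : 0 ≤ 1 + (1 - α) / α * (N / M) := by positivity
  calc α * M + (1 - α) * N = (1 + (1 - α) / α * (N / M)) * (α * M) := by field_simp
    _ ≤ (1 + (1 - α) / α * (N / M)) * (α * (γ * M')) := by gcongr
    _ = γ * (1 + (1 - α) / α * (N / M)) * (α * M') := by ring
    _ ≤ γ * (1 + (1 - α) / α * (N / M)) * (α * M' + (1 - α) * N') := by
      gcongr
      exact le_add_of_nonneg_right (mul_nonneg h1α hN')

theorem stmt_17_general (K : ℕ)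
    (𝓕 : Finset (Finset (Fin K))) (h𝓕 : ∀ F ∈ 𝓕, F.Nonempty)
    (m : Finset (Fin K) → ℝ) (hm_pos : ∀ F ∈ 𝓕, 0 < m F)
    (X : Type*)
    (f : X → Fin K → ℝ) (hf : ∀ x k, 0 ≤ f x k)
    (α : ℝ) (hα : 0 < α ∧ α ≤ 1)
    (γ : ℝ)
    (G : X → ℝ)
    (hG : ∀ x, G x = ∑ F ∈ 𝓕.attach, m F.1 * F.1.sup' (h𝓕 F.1 F.2) (f x))
    (H : X → ℝ)
    (hH : ∀ x, H x = ∑ F ∈ 𝓕.attach, m F.1 *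
      (α * F.1.sup' (h𝓕 F.1 F.2) (f x) + (1 - α) * F.1.inf' (h𝓕 F.1 F.2) (f x)))
    (xhat xstar : X)
    (hxhat : ∀ x : X, G xhat ≤ γ * G x)
    (hGpos : 0 < G xhat)
    (ρ : ℝ)
    (hρ : ρ = (∑ F ∈ 𝓕.attach, m F.1 * F.1.inf' (h𝓕 F.1 F.2) (f xhat)) /
              (∑ F ∈ 𝓕.attach, m F.1 * F.1.sup' (h𝓕 F.1 F.2) (f xhat))) :
    (0 ≤ ρ ∧ ρ ≤ 1) ∧ H xhat ≤ γ * (1 + ((1 - α) / α) * ρ) * H xstar := by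
  have hm : ∀ F ∈ 𝓕, 0 ≤ m F := fun F hF => (hm_pos F hF).le
  have hγ : 1 ≤ γ := (le_mul_iff_one_le_left hGpos).1 (hxhat xhat)
  change ∀ x, G x = expectedMax 𝓕 h𝓕 m (f x) at hG
  change ρ = expectedMin 𝓕 h𝓕 m (f xhat) / expectedMax 𝓕 h𝓕 m (f xhat) at hρ
  rw [hG] at hGpos
  refine ⟨⟨?_, ?_⟩, ?_⟩
  · exact hρ ▸ div_nonneg (expectedMin_nonneg hm (hf xhat)) hGpos.le
  · exact hρ ▸ (div_le_one hGpos).2 (expectedMin_le_expectedMax hm (f xhat))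
  · rw [hH, hH, sum_hurwicz_eq, sum_hurwicz_eq, hρ]
    exact hurwicz_le_of_max_le_mul hα.1 hα.2 (zero_le_one.trans hγ) hGpos
      (expectedMin_nonneg hm (hf xhat)) (expectedMin_nonneg hm (hf xstar))
      (by simpa only [hG] using hxhat xstar)

theorem stmt_17 (K : ℕ) (hK : 1 ≤ K)
    (𝓕 : Finset (Finset (Fin K))) (h𝓕 : ∀ F ∈ 𝓕, F.Nonempty)
    (m : Finset (Fin K) → ℝ) (hm_pos : ∀ F ∈ 𝓕, 0 < m F)
    (hm_sum : ∑ F ∈ 𝓕, m F = 1)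
    (X : Type*) [Nonempty X]
    (f : X → Fin K → ℝ) (hf : ∀ x k, 0 ≤ f x k)
    (α : ℝ) (hα : 0 < α ∧ α ≤ 1)
    (γ : ℝ) (hγ : 1 ≤ γ)
    (G : X → ℝ)
    (hG : ∀ x, G x = ∑ F ∈ 𝓕.attach, m F.1 * F.1.sup' (h𝓕 F.1 F.2) (f x))
    (H : X → ℝ)
    (hH : ∀ x, H x = ∑ F ∈ 𝓕.attach, m F.1 *
      (α * F.1.sup' (h𝓕 F.1 F.2) (f x) + (1 - α) * F.1.inf' (h𝓕 F.1 F.2) (f x)))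
    (xhat xstar : X)
    (hxhat : ∀ x : X, G xhat ≤ γ * G x)
    (hGpos : 0 < G xhat)
    (hxstar : ∀ x : X, H xstar ≤ H x)
    (ρ : ℝ)
    (hρ : ρ = (∑ F ∈ 𝓕.attach, m F.1 * F.1.inf' (h𝓕 F.1 F.2) (f xhat)) /
              (∑ F ∈ 𝓕.attach, m F.1 * F.1.sup' (h𝓕 F.1 F.2) (f xhat))) :
    (0 ≤ ρ ∧ ρ ≤ 1) ∧ H xhat ≤ γ * (1 + ((1 - α) / α) * ρ) * H xstar :=
  stmt_17_general K 𝓕 h𝓕 m hm_pos X f hf α hα γ G hG H hH xhat xstar hxhat hGpos ρ hρ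
end

section
/- Upper expectation formula for belief functions: Let 𝓕 be a finite family of nonempty subsets of [K] with masses m(F) > 0 summing to 1, and let f : [K] → ℝ. Consider allocations a(k,F) ≥ 0 defined for k ∈ F, F ∈ 𝓕, satisfying Σ_{k∈F} a(k,F) = m(F) for every F, and the induced probability p_k = Σ_{F∋k} a(k,F). Then the maximum of Σ_k p_k f(k) over all such allocations equals Σ_{F∈𝓕} m(F)·max_{k∈F} f(k), and the minimum equals Σ_{F∈𝓕} m(F)·min_{k∈F} f(k). -/
/-!
Exchanging the order of summation, the value of an allocation is `∑_F ∑_{k ∈ F} a(k,F) f(k)`, and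
each inner sum is a combination of the values of `f` on `F` with nonnegative weights of total
mass `m(F)`, hence lies between `m(F) · min_F f` and `m(F) · max_F f`. Both bounds are attained by
putting all of `m(F)` on a maximiser (resp. minimiser) of `f` in `F`.
-/

open Finset

namespace BeliefFunction

variable {ι : Type*}

theorem sum_mul_le_sum_mul_sup' {F : Finset ι} (hF : F.Nonempty) {w : ι → ℝ}
    (hw : ∀ k ∈ F, 0 ≤ w k) (f : ι → ℝ) :
    ∑ k ∈ F, w k * f k ≤ (∑ k ∈ F, w k) * F.sup' hF f := by
  rw [sum_mul]
  exact sum_le_sum fun k hk => mul_le_mul_of_nonneg_left (le_sup' f hk) (hw k hk)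

theorem sum_mul_inf'_le_sum_mul {F : Finset ι} (hF : F.Nonempty) {w : ι → ℝ}
    (hw : ∀ k ∈ F, 0 ≤ w k) (f : ι → ℝ) :
    (∑ k ∈ F, w k) * F.inf' hF f ≤ ∑ k ∈ F, w k * f k := by
  rw [sum_mul]
  exact sum_le_sum fun k hk => mul_le_mul_of_nonneg_left (inf'_le f hk) (hw k hk)

variable [Fintype ι] [DecidableEq ι]

def allocationValues (𝓕 : Finset (Finset ι)) (m : Finset ι → ℝ) (f : ι → ℝ) : Set ℝ :=
  {s | ∃ a : ι → Finset ι → ℝ,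
    (∀ k F, 0 ≤ a k F) ∧
    (∀ F ∈ 𝓕, ∑ k ∈ F, a k F = m F) ∧
    s = ∑ k, (∑ F ∈ 𝓕.filter (fun F => k ∈ F), a k F) * f k}

theorem sum_induced_mul_eq (𝓕 : Finset (Finset ι)) (a : ι → Finset ι → ℝ) (f : ι → ℝ) :
    ∑ k, (∑ F ∈ 𝓕.filter (fun F => k ∈ F), a k F) * f k = ∑ F ∈ 𝓕, ∑ k ∈ F, a k F * f k := by
  simp_rw [sum_mul, sum_filter]
  rw [sum_comm]
  exact sum_congr rfl fun F _ => by rw [← sum_filter, filter_mem_eq_inter, univ_inter]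

theorem sum_mul_apply_mem_allocationValues {𝓕 : Finset (Finset ι)} {m : Finset ι → ℝ}
    (hm : ∀ F ∈ 𝓕, 0 ≤ m F) (f : ι → ℝ) (σ : 𝓕 → ι) (hσ : ∀ F, σ F ∈ F.1) :
    ∑ F ∈ 𝓕.attach, m F.1 * f (σ F) ∈ allocationValues 𝓕 m f := by
  let a : ι → Finset ι → ℝ := fun k F => if h : F ∈ 𝓕 then if k = σ ⟨F, h⟩ then m F else 0 else 0
  refine ⟨a, fun k F => ?_, fun F hF => ?_, ?_⟩
  · unfold a
    split_ifs with hF <;> first | exact le_rfl | exact hm F hF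
  · simp [a, hF, hσ ⟨F, hF⟩]
  · rw [sum_induced_mul_eq, ← sum_attach 𝓕]
    refine sum_congr rfl fun F _ => ?_
    simp [a, hσ F]

theorem isGreatest_allocationValues {𝓕 : Finset (Finset ι)} (h𝓕 : ∀ F ∈ 𝓕, F.Nonempty)
    {m : Finset ι → ℝ} (hm : ∀ F ∈ 𝓕, 0 ≤ m F) (f : ι → ℝ) :
    IsGreatest (allocationValues 𝓕 m f) (∑ F ∈ 𝓕.attach, m F.1 * F.1.sup' (h𝓕 F.1 F.2) f) := by
  choose σ hσ using fun F : 𝓕 => exists_mem_eq_sup' (h𝓕 F.1 F.2) f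
  refine ⟨?_, ?_⟩
  · simpa only [hσ] using sum_mul_apply_mem_allocationValues hm f σ fun F => (hσ F).1
  · rintro s ⟨a, ha, ham, rfl⟩
    rw [sum_induced_mul_eq, ← sum_attach 𝓕]
    refine sum_le_sum fun F _ => ?_
    rw [← ham F.1 F.2]
    exact sum_mul_le_sum_mul_sup' _ (fun k _ => ha k F) f

theorem isLeast_allocationValues {𝓕 : Finset (Finset ι)} (h𝓕 : ∀ F ∈ 𝓕, F.Nonempty)
    {m : Finset ι → ℝ} (hm : ∀ F ∈ 𝓕, 0 ≤ m F) (f : ι → ℝ) :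
    IsLeast (allocationValues 𝓕 m f) (∑ F ∈ 𝓕.attach, m F.1 * F.1.inf' (h𝓕 F.1 F.2) f) := by
  choose σ hσ using fun F : 𝓕 => exists_mem_eq_inf' (h𝓕 F.1 F.2) f
  refine ⟨?_, ?_⟩
  · simpa only [hσ] using sum_mul_apply_mem_allocationValues hm f σ fun F => (hσ F).1
  · rintro s ⟨a, ha, ham, rfl⟩
    rw [sum_induced_mul_eq, ← sum_attach 𝓕]
    refine sum_le_sum fun F _ => ?_
    rw [← ham F.1 F.2]
    exact sum_mul_inf'_le_sum_mul _ (fun k _ => ha k F) f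

end BeliefFunction

open BeliefFunction in
theorem stmt_18_general (K : ℕ)
    (𝓕 : Finset (Finset (Fin K))) (h𝓕 : ∀ F ∈ 𝓕, F.Nonempty)
    (m : Finset (Fin K) → ℝ) (hm_pos : ∀ F ∈ 𝓕, 0 < m F)
    (f : Fin K → ℝ) :
    IsGreatest {s : ℝ | ∃ a : Fin K → Finset (Fin K) → ℝ,
        (∀ k F, 0 ≤ a k F) ∧
        (∀ F ∈ 𝓕, ∑ k ∈ F, a k F = m F) ∧
        s = ∑ k, (∑ F ∈ 𝓕.filter (fun F => k ∈ F), a k F) * f k}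
      (∑ F ∈ 𝓕.attach, m F.1 * F.1.sup' (h𝓕 F.1 F.2) f) ∧
    IsLeast {s : ℝ | ∃ a : Fin K → Finset (Fin K) → ℝ,
        (∀ k F, 0 ≤ a k F) ∧
        (∀ F ∈ 𝓕, ∑ k ∈ F, a k F = m F) ∧
        s = ∑ k, (∑ F ∈ 𝓕.filter (fun F => k ∈ F), a k F) * f k}
      (∑ F ∈ 𝓕.attach, m F.1 * F.1.inf' (h𝓕 F.1 F.2) f) := by
  have hm : ∀ F ∈ 𝓕, 0 ≤ m F := fun F hF => (hm_pos F hF).le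
  exact ⟨isGreatest_allocationValues h𝓕 hm f, isLeast_allocationValues h𝓕 hm f⟩

theorem stmt_18 (K : ℕ) (hK : 1 ≤ K)
    (𝓕 : Finset (Finset (Fin K))) (h𝓕 : ∀ F ∈ 𝓕, F.Nonempty)
    (m : Finset (Fin K) → ℝ) (hm_pos : ∀ F ∈ 𝓕, 0 < m F)
    (hm_sum : ∑ F ∈ 𝓕, m F = 1)
    (f : Fin K → ℝ) :
    IsGreatest {s : ℝ | ∃ a : Fin K → Finset (Fin K) → ℝ,
        (∀ k F, 0 ≤ a k F) ∧
        (∀ F ∈ 𝓕, ∑ k ∈ F, a k F = m F) ∧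
        s = ∑ k, (∑ F ∈ 𝓕.filter (fun F => k ∈ F), a k F) * f k}
      (∑ F ∈ 𝓕.attach, m F.1 * F.1.sup' (h𝓕 F.1 F.2) f) ∧
    IsLeast {s : ℝ | ∃ a : Fin K → Finset (Fin K) → ℝ,
        (∀ k F, 0 ≤ a k F) ∧
        (∀ F ∈ 𝓕, ∑ k ∈ F, a k F = m F) ∧
        s = ∑ k, (∑ F ∈ 𝓕.filter (fun F => k ∈ F), a k F) * f k}
      (∑ F ∈ 𝓕.attach, m F.1 * F.1.inf' (h𝓕 F.1 F.2) f) :=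
  stmt_18_general K 𝓕 h𝓕 m hm_pos f
end
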